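/- Let (b_n, ∘) (n ≥ 2) be a compatible anti-pre-Lie structure on b_n satisfying the grading conditions of Proposition V2(n-1)V0, and view b_n as a representation of the subalgebra b ≅ sl₂(ℂ) spanned by x, y, z₁ via ρ(a)(b) = −a∘b. Then for any m ≥ 3, b_n contains no nonzero vector ξ that is a highest weight vector of weight m (i.e., z₁·ξ = mξ and x·ξ = 0 with y·(y·(y·ξ)) ≠ 0 impossible): in fact y∘(y∘(y∘ξ)) = 0 for every ξ ∈ b_n. -/
import Mathlib


/-- For a compatible anti-pre-Lie structure on `b_n` (`n ≥ 2`)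
satisfying the grading conditions, the triple left multiplication by `y` annihilates
all of `b_n`: `y∘(y∘(y∘ξ)) = 0` for every `ξ ∈ b_n`.  In particular, viewing `b_n` as
a representation of `b ≅ sl₂(ℂ)` via `ρ(a)(b) = −a∘b`, there is no highest weight
vector of weight `m ≥ 3`. -/
theorem stmt15 {g : Type*} [LieRing g] [LieAlgebra ℂ g]
    (n : ℕ) (hn : 2 ≤ n) (x y : g) (z : Fin n → g)
    (hindep : LinearIndependent ℂ (Sum.elim ![x, y] z))
    (hspan : Submodule.span ℂ (Set.range (Sum.elim ![x, y] z)) = ⊤)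
    (z₁ z₂ : g) (hz₁ : z₁ = z ⟨0, by omega⟩) (hz₂ : z₂ = z ⟨1, by omega⟩)
    (hb1 : ⁅z₁, x⁆ = (2 : ℂ) • x) (hb2 : ⁅z₁, y⁆ = (-2 : ℂ) • y) (hb3 : ⁅x, y⁆ = z₁)
    (hb4 : ⁅z₂, x⁆ = -x) (hb5 : ⁅z₂, y⁆ = y)
    (hb6 : ∀ i j : Fin n, ⁅z i, z j⁆ = 0)
    (hb7 : ∀ i : Fin n, 2 ≤ (i : ℕ) → ∀ a : g, ⁅z i, a⁆ = 0)
    (c : g →ₗ[ℂ] g →ₗ[ℂ] g)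
    (hcompat : ∀ a b : g, c a b - c b a = ⁅a, b⁆)
    (hapl : ∀ a b d : g, c a (c b d) - c b (c a d) = c ⁅b, a⁆ d)
    (hxy : c x y ∈ Submodule.span ℂ (Set.range z))
    (hyx : c y x ∈ Submodule.span ℂ (Set.range z))
    (hzx : ∀ i, c (z i) x ∈ Submodule.span ℂ {x})
    (hxz : ∀ i, c x (z i) ∈ Submodule.span ℂ {x})
    (hzy : ∀ i, c (z i) y ∈ Submodule.span ℂ {y})
    (hyz : ∀ i, c y (z i) ∈ Submodule.span ℂ {y})
    (hzz : ∀ i j, c (z i) (z j) ∈ Submodule.span ℂ (Set.range z))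
    (hxx : c x x = 0) (hyy : c y y = 0) :
    ∀ ξ : g, c y (c y (c y ξ)) = 0 := by
  have key1 : ∀ v ∈ Submodule.span ℂ ({y} : Set g), c y v = 0 := by
    intro v hv
    obtain ⟨a, rfl⟩ := Submodule.mem_span_singleton.mp hv
    simp [hyy]
  have key2 : ∀ v ∈ Submodule.span ℂ (Set.range z),
      c y v ∈ Submodule.span ℂ ({y} : Set g) := by
    intro v hv
    induction hv using Submodule.span_induction with
    | mem w hw => obtain ⟨i, rfl⟩ := hw; exact hyz i
    | zero => simp
    | add a b _ _ ha hb => rw [map_add]; exact add_mem ha hb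
    | smul a w _ hw => rw [map_smul]; exact Submodule.smul_mem _ _ hw
  intro ξ
  have hξ : ξ ∈ Submodule.span ℂ (Set.range (Sum.elim ![x, y] z)) := by
    rw [hspan]; exact Submodule.mem_top
  induction hξ using Submodule.span_induction with
  | mem w hw =>
    obtain ⟨s, rfl⟩ := hw
    rcases s with s | i
    · fin_cases s
      · show c y (c y (c y x)) = 0
        exact key1 _ (key2 _ hyx)
      · show c y (c y (c y y)) = 0
        rw [hyy]; simp
    · simp only [Sum.elim_inr]
      rw [key1 _ (hyz i)]; simp
  | zero => simp
  | add a b _ _ ha hb => rw [map_add, map_add, map_add, ha, hb, add_zero]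
  | smul a w _ hw => rw [map_smul, map_smul, map_smul, hw, smul_zero]
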